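/- There exists a Lucas semigroup that is not a local Lucas semigroup. Specifically, L(18, 8, 1/96) equals the additive submonoid ⟨6, 8, 10⟩ of ℕ generated by 6, 8, and 10, yet for all P, Q ∈ ℤ, every prime p, and every integer r, the local Lucas semigroup L(P,Q,p^{−r}) is not equal to ⟨6, 8, 10⟩. -/

import Mathlib

/-!
Modulo 96 the pair `(U₆, U₇)` of `U(18, 8)` is `(0, 64)`, and two steps of the recurrence
map `(0, 64)` to itself; this pins down `L(18, 8, 1/96)`.

Suppose `{n : p^m ∣ U n} = ⟨6, 8, 10⟩` with `m ≥ 1`. If `p ∣ Q`, then `U₆ ≡ P⁵ (mod Q)` forces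
`p ∣ P`, so `p^m ∣ U_{2m+1}`, an odd index. If `p ∤ Q`, two consecutive terms are never both
divisible by `p`, so `p ∤ U₇`; then `p^m ∣ U₈ + Q U₆ = P U₇` gives `p^m ∣ P = U₂`.
-/

/-- The Lucas sequence `U_n(P,Q)`: `U_0 = 0`, `U_1 = 1`,
`U_{n+2} = P·U_{n+1} − Q·U_n`. -/
def lucasU (P Q : ℤ) : ℕ → ℤ
  | 0 => 0
  | 1 => 1
  | n + 2 => P * lucasU P Q (n + 1) - Q * lucasU P Q n

/-- The Lucas semigroup `L(P,Q,R) = {n ∈ ℕ : U_n(P,Q)·R ∈ ℤ}`. -/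
def lucasSG (P Q : ℤ) (R : ℚ) : Set ℕ :=
  {n : ℕ | ∃ k : ℤ, (lucasU P Q n : ℚ) * R = (k : ℚ)}

/-- The local Lucas semigroup `L(P,Q,p^{-r}) = {n ∈ ℕ : ν_p(U_n) ≥ r}`,
equivalently the set of `n` with `U_n · p^{-r} ∈ ℤ`. -/
def localLucasSG (P Q : ℤ) (p : ℕ) (r : ℤ) : Set ℕ :=
  lucasSG P Q ((p : ℚ) ^ (-r))

section

variable {P Q : ℤ}

@[simp] lemma lucasU_zero : lucasU P Q 0 = 0 := rfl

@[simp] lemma lucasU_one : lucasU P Q 1 = 1 := rfl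

lemma lucasU_add_two (n : ℕ) :
    lucasU P Q (n + 2) = P * lucasU P Q (n + 1) - Q * lucasU P Q n := rfl

lemma lucasU_two : lucasU P Q 2 = P := by simp [lucasU_add_two]

lemma mem_lucasSG_inv_iff {d : ℤ} (hd : d ≠ 0) (n : ℕ) :
    n ∈ lucasSG P Q (d : ℚ)⁻¹ ↔ d ∣ lucasU P Q n := by
  have hd' : (d : ℚ) ≠ 0 := by exact_mod_cast hd
  constructor
  · rintro ⟨k, hk⟩
    refine ⟨k, ?_⟩
    field_simp at hk
    exact_mod_cast hk
  · rintro ⟨k, hk⟩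
    exact ⟨k, by rw [hk]; push_cast; field_simp⟩

-- For `r ≤ 0` both sides hold for every `n`, since `r.toNat = 0`.
lemma mem_localLucasSG_iff {p : ℕ} (hp : p ≠ 0) (r : ℤ) (n : ℕ) :
    n ∈ localLucasSG P Q p r ↔ (p : ℤ) ^ r.toNat ∣ lucasU P Q n := by
  rcases le_or_gt r 0 with hr | hr
  · rw [Int.toNat_eq_zero.mpr hr, pow_zero]
    refine iff_of_true ⟨lucasU P Q n * (p : ℤ) ^ (-r).toNat, ?_⟩ (one_dvd _)
    rw [show (p : ℚ) ^ (-r) = (p : ℚ) ^ (-r).toNat by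
      rw [← zpow_natCast, Int.toNat_of_nonneg (by omega)]]
    push_cast
    rfl
  · have hpr : (p : ℚ) ^ (-r) = (((p : ℤ) ^ r.toNat : ℤ) : ℚ)⁻¹ := by
      rw [zpow_neg, Int.cast_pow, Int.cast_natCast, ← zpow_natCast, Int.toNat_of_nonneg hr.le]
    rw [localLucasSG, hpr]
    exact mem_lucasSG_inv_iff (pow_ne_zero _ (by exact_mod_cast hp)) n

lemma lucasU_succ_modEq_pow (n : ℕ) : lucasU P Q (n + 1) ≡ P ^ n [ZMOD Q] := by
  induction n with
  | zero => simp [Int.ModEq.refl]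
  | succ n ih =>
    have hQ : Q * lucasU P Q n ≡ 0 [ZMOD Q] := Int.modEq_zero_iff_dvd.mpr (dvd_mul_right _ _)
    simpa [lucasU_add_two, pow_succ'] using (ih.mul_left P).sub hQ

lemma pow_dvd_lucasU_of_dvd {d : ℤ} (hP : d ∣ P) (hQ : d ∣ Q) (n : ℕ) :
    d ^ (n / 2) ∣ lucasU P Q (n + 1) := by
  induction n using Nat.strong_induction_on with
  | _ n ih =>
    match n, ih with
    | 0, _ | 1, _ => simp
    | n + 2, ih =>
      have hk : (n + 2) / 2 = n / 2 + 1 := by omega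
      show d ^ _ ∣ lucasU P Q ((n + 1) + 2)
      rw [lucasU_add_two, hk, pow_succ']
      exact dvd_sub
        (mul_dvd_mul hP ((pow_dvd_pow d (by omega)).trans (ih (n + 1) (by omega))))
        (mul_dvd_mul hQ (ih n (by omega)))

lemma not_dvd_lucasU_and_succ {p : ℤ} (hp : Prime p) (hQ : ¬ p ∣ Q) (n : ℕ) :
    ¬ (p ∣ lucasU P Q n ∧ p ∣ lucasU P Q (n + 1)) := by
  induction n with
  | zero => simpa using hp.not_dvd_one
  | succ n ih =>
    rintro ⟨h₁, h₂⟩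
    rw [lucasU_add_two] at h₂
    have : p ∣ Q * lucasU P Q n := by simpa using (dvd_sub (h₁.mul_left P) h₂)
    exact ih ⟨(hp.dvd_mul.mp this).resolve_left hQ, h₁⟩

lemma pow_dvd_lucasU_two_or_odd {p : ℤ} (hp : Prime p) {m : ℕ} (hm : m ≠ 0)
    (h₆ : p ^ m ∣ lucasU P Q 6) (h₈ : p ^ m ∣ lucasU P Q 8) :
    p ^ m ∣ lucasU P Q 2 ∨ p ^ m ∣ lucasU P Q (2 * m + 1) := by
  have hp₆ : p ∣ lucasU P Q 6 := (dvd_pow_self p hm).trans h₆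
  by_cases hQ : p ∣ Q
  · have hP₅ : p ∣ P ^ 5 := by
      simpa using dvd_add (hQ.trans (lucasU_succ_modEq_pow (P := P) 5).dvd) hp₆
    right
    simpa using pow_dvd_lucasU_of_dvd (hp.dvd_of_dvd_pow hP₅) hQ (2 * m)
  · have h₇ : ¬ p ∣ lucasU P Q 7 := fun h₇ ↦ not_dvd_lucasU_and_succ hp hQ 6 ⟨hp₆, h₇⟩
    have h₇P : p ^ m ∣ lucasU P Q 7 * P := by
      have e : lucasU P Q 7 * P = lucasU P Q 8 + Q * lucasU P Q 6 := by
        rw [lucasU_add_two 6]; ring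
      exact e ▸ dvd_add h₈ (h₆.mul_left Q)
    left
    rw [lucasU_two]
    exact hp.pow_dvd_of_dvd_mul_left m h₇ h₇P

lemma lucasU_18_8_modEq (k : ℕ) :
    lucasU 18 8 (2 * k + 6) ≡ 0 [ZMOD 96] ∧ lucasU 18 8 (2 * k + 7) ≡ 64 [ZMOD 96] := by
  induction k with
  | zero => decide
  | succ k ih =>
    obtain ⟨h₆, h₇⟩ := ih
    have h₈ : lucasU 18 8 (2 * k + 8) ≡ 0 [ZMOD 96] :=
      ((h₇.mul_left 18).sub (h₆.mul_left 8)).trans (by decide)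
    have h₉ : lucasU 18 8 (2 * k + 9) ≡ 64 [ZMOD 96] :=
      ((h₈.mul_left 18).sub (h₇.mul_left 8)).trans (by decide)
    exact ⟨by simpa [Nat.mul_succ] using h₈, by simpa [Nat.mul_succ] using h₉⟩

lemma mem_closure_six_eight_ten {n : ℕ} :
    n ∈ AddSubmonoid.closure ({6, 8, 10} : Set ℕ) ↔ n = 0 ∨ (n % 2 = 0 ∧ 6 ≤ n) := by
  constructor
  · intro h
    induction h using AddSubmonoid.closure_induction with
    | mem x hx => rcases hx with rfl | rfl | rfl <;> simp
    | zero => simp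
    | add a b _ _ ha hb => omega
  · rintro (rfl | ⟨h₂, h₆⟩)
    · exact zero_mem _
    induction n using Nat.strong_induction_on with
    | _ n ih =>
      by_cases hn : n < 12
      · obtain rfl | rfl | rfl : n = 6 ∨ n = 8 ∨ n = 10 := by omega
        all_goals exact AddSubmonoid.subset_closure (by simp)
      · obtain ⟨k, rfl⟩ : ∃ k, n = k + 6 := ⟨n - 6, by omega⟩
        exact add_mem (ih k (by omega) (by omega) (by omega))
          (AddSubmonoid.subset_closure (by simp))

lemma dvd_lucasU_18_8_iff (n : ℕ) :
    (96 : ℤ) ∣ lucasU 18 8 n ↔ n ∈ AddSubmonoid.closure ({6, 8, 10} : Set ℕ) := by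
  rw [mem_closure_six_eight_ten, ← Int.modEq_zero_iff_dvd]
  by_cases hn : n < 6
  · interval_cases n <;> decide
  obtain ⟨k, rfl | rfl⟩ : ∃ k, n = 2 * k + 6 ∨ n = 2 * k + 7 := ⟨(n - 6) / 2, by omega⟩
  · simpa [Nat.add_mod] using (lucasU_18_8_modEq k).1
  · have h₇ := (lucasU_18_8_modEq k).2
    refine iff_of_false (fun h ↦ ?_) (by omega)
    exact absurd (h₇.symm.trans h) (by decide)

end

/-- There is a Lucas semigroup that is not a local Lucas semigroup:
`L(18, 8, 1/96) = ⟨6, 8, 10⟩`, yet no local Lucas semigroup `L(P,Q,p^{-r})`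
equals `⟨6, 8, 10⟩`. -/
theorem lucasSG_not_local :
    lucasSG 18 8 (1 / 96) =
        (AddSubmonoid.closure ({6, 8, 10} : Set ℕ) : Set ℕ) ∧
      ∀ (P Q : ℤ) (p : ℕ), p.Prime → ∀ r : ℤ,
        localLucasSG P Q p r ≠
          (AddSubmonoid.closure ({6, 8, 10} : Set ℕ) : Set ℕ) := by
  refine ⟨?_, fun P Q p hp r h ↦ ?_⟩
  · ext n
    rw [SetLike.mem_coe, ← dvd_lucasU_18_8_iff, one_div,
      show (96 : ℚ) = ((96 : ℤ) : ℚ) by norm_num, mem_lucasSG_inv_iff (by norm_num)]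
  · have hS (n : ℕ) : (p : ℤ) ^ r.toNat ∣ lucasU P Q n ↔ n = 0 ∨ (n % 2 = 0 ∧ 6 ≤ n) := by
      rw [← mem_localLucasSG_iff hp.ne_zero, h, SetLike.mem_coe, mem_closure_six_eight_ten]
    have hm : r.toNat ≠ 0 := fun hm ↦ by simpa [hm] using hS 1
    rcases pow_dvd_lucasU_two_or_odd (Nat.prime_iff_prime_int.mp hp) hm
      ((hS 6).mpr (by omega)) ((hS 8).mpr (by omega)) with h₂ | hodd
    · have := (hS 2).mp h₂; omega
    · have := (hS _).mp hodd; omega
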